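/- There exists a constant C > 0 such that for all n ≥ 1: r_4(ℤ_{11}^n) ≥ C · 7^n / n^3. -/

import Mathlib

/-!
On the digits `{0, …, 6} ⊆ ℤ/11ℤ` the weights `w = 30, 26, 18, 15, 8, 6, 0` satisfy
`w (a + d) + w (a + 2d) < w a + w (a + 3d)` for every 4-term progression of digits with `d ≠ 0`
(a finite check, wrap-around progressions such as `1, 6, 0, 5` included). Summing over coordinates,
the middle terms of a proper 4-AP in `{0, …, 6}ⁿ` weigh strictly less in total than its end terms,
so a level set of the total weight contains no proper 4-AP. The total weight takes at most
`30 n + 1` values, so by pigeonhole some level set has at least `7ⁿ / (30 n + 1)` elements.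
-/

/-- `S ⊆ (ℤ/mℤ)^n` contains no proper `k`-term arithmetic progression. -/
def ProgFree (m k : ℕ) {n : ℕ} (S : Finset (Fin n → ZMod m)) : Prop :=
  ¬ ∃ x d : Fin n → ZMod m,
      (Function.Injective fun i : Fin k => x + (i : ℕ) • d) ∧
      ∀ i : Fin k, x + (i : ℕ) • d ∈ S

/-- Maximal size of a subset of `(ℤ/mℤ)^n` without a proper `k`-term AP. -/
noncomputable def rAP (k m n : ℕ) : ℕ :=
  sSup {c : ℕ | ∃ S : Finset (Fin n → ZMod m), ProgFree m k S ∧ S.card = c}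

open Finset

lemma card_le_rAP {k m n : ℕ} [NeZero m] {S : Finset (Fin n → ZMod m)} (hS : ProgFree m k S) :
    S.card ≤ rAP k m n :=
  le_csSup ⟨Fintype.card (Fin n → ZMod m), by
    rintro _ ⟨T, -, rfl⟩
    exact T.card_le_univ⟩ ⟨S, hS, rfl⟩

section FourAPConvex

variable {G ι : Type*} [AddCommGroup G]

def FourAPConvex (D : Finset G) (w : G → ℕ) : Prop :=
  ∀ a d, d ≠ 0 → a ∈ D → a + d ∈ D → a + 2 • d ∈ D → a + 3 • d ∈ D →
    w (a + d) + w (a + 2 • d) < w a + w (a + 3 • d)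

lemma FourAPConvex.sum_lt_sum [Fintype ι] {D : Finset G} {w : G → ℕ} (hw : FourAPConvex D w)
    {x d : ι → G} (hd : d ≠ 0) (hx : ∀ t < 4, ∀ i, (x + t • d) i ∈ D) :
    ∑ i, w ((x + d) i) + ∑ i, w ((x + 2 • d) i) < ∑ i, w (x i) + ∑ i, w ((x + 3 • d) i) := by
  have hD : ∀ i, x i ∈ D ∧ x i + d i ∈ D ∧ x i + 2 • d i ∈ D ∧ x i + 3 • d i ∈ D := fun i =>
    ⟨by simpa using hx 0 (by norm_num) i, by simpa using hx 1 (by norm_num) i,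
      hx 2 (by norm_num) i, hx 3 (by norm_num) i⟩
  have hle : ∀ i ∈ univ, w (x i + d i) + w (x i + 2 • d i) ≤ w (x i) + w (x i + 3 • d i) := by
    intro i _
    by_cases hdi : d i = 0
    · simp [hdi]
    · obtain ⟨h0, h1, h2, h3⟩ := hD i
      exact (hw _ _ hdi h0 h1 h2 h3).le
  obtain ⟨j, hj⟩ := Function.ne_iff.mp hd
  obtain ⟨h0, h1, h2, h3⟩ := hD j
  simpa only [← sum_add_distrib, Pi.add_apply, Pi.smul_apply] using
    Finset.sum_lt_sum hle ⟨j, mem_univ j, hw _ _ hj h0 h1 h2 h3⟩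

end FourAPConvex

section LevelSet

variable {G ι : Type*} [Fintype ι] [DecidableEq ι]

def levelSet (D : Finset G) (w : G → ℕ) (r : ℕ) : Finset (ι → G) :=
  {x ∈ Fintype.piFinset fun _ => D | ∑ i, w (x i) = r}

lemma mem_levelSet {D : Finset G} {w : G → ℕ} {r : ℕ} {x : ι → G} :
    x ∈ levelSet D w r ↔ (∀ i, x i ∈ D) ∧ ∑ i, w (x i) = r := by
  simp [levelSet]

lemma exists_le_card_levelSet (D : Finset G) (w : G → ℕ) (B : ℕ) (hB : ∀ a ∈ D, w a ≤ B) :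
    ∃ r, (D.card : ℝ) ^ Fintype.card ι / (B * Fintype.card ι + 1) ≤
      (levelSet D w r : Finset (ι → G)).card := by
  have hmaps : ∀ x ∈ Fintype.piFinset fun _ : ι => D,
      ∑ i, w (x i) ∈ range (B * Fintype.card ι + 1) := by
    intro x hx
    rw [Fintype.mem_piFinset] at hx
    rw [mem_range, Nat.lt_succ_iff]
    calc ∑ i, w (x i) ≤ ∑ _i : ι, B := sum_le_sum fun i _ => hB _ (hx i)
      _ = B * Fintype.card ι := by simp [mul_comm]
  refine (exists_le_card_fiber_of_nsmul_le_card_of_maps_to hmaps nonempty_range_add_one ?_).imp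
    fun r hr => hr.2
  rw [card_range, nsmul_eq_mul, Fintype.card_piFinset, prod_const, card_univ]
  push_cast
  rw [mul_div_cancel₀ _ (by positivity)]

end LevelSet

lemma progFree_four_levelSet {m n : ℕ} {D : Finset (ZMod m)} {w : ZMod m → ℕ}
    (hw : FourAPConvex D w) (r : ℕ) : ProgFree m 4 (levelSet D w r : Finset (Fin n → ZMod m)) := by
  rintro ⟨x, d, hinj, hmem⟩
  have hd : d ≠ 0 := by
    rintro rfl
    exact absurd (@hinj 0 1 (by simp)) (by decide)
  have hterm : ∀ t < 4, (∀ i, (x + t • d) i ∈ D) ∧ ∑ i, w ((x + t • d) i) = r :=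
    fun t ht => mem_levelSet.mp (hmem ⟨t, ht⟩)
  have h0 := (hterm 0 (by norm_num)).2
  have h1 := (hterm 1 (by norm_num)).2
  have h2 := (hterm 2 (by norm_num)).2
  have h3 := (hterm 3 (by norm_num)).2
  simp only [zero_smul, add_zero, one_smul] at h0 h1
  have := hw.sum_lt_sum hd fun t ht => (hterm t ht).1
  omega

def digitWeight (a : ZMod 11) : ℕ := [30, 26, 18, 15, 8, 6, 0].getD a.val 0

def digits : Finset (ZMod 11) := {a | a.val < 7}

lemma card_digits : digits.card = 7 := by decide

lemma digitWeight_le : ∀ a ∈ digits, digitWeight a ≤ 30 := by decide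

lemma fourAPConvex_digitWeight : FourAPConvex digits digitWeight := by
  unfold FourAPConvex
  decide

lemma exists_progFree_eleven (n : ℕ) :
    ∃ S : Finset (Fin n → ZMod 11), ProgFree 11 4 S ∧ (7 : ℝ) ^ n / (30 * n + 1) ≤ S.card := by
  obtain ⟨r, hr⟩ := exists_le_card_levelSet (ι := Fin n) digits digitWeight 30 digitWeight_le
  refine ⟨_, progFree_four_levelSet fourAPConvex_digitWeight r, ?_⟩
  simpa [card_digits] using hr

theorem stmt10 :
    ∃ C : ℝ, 0 < C ∧ ∀ n : ℕ, 1 ≤ n →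
      C * 7 ^ n / (n : ℝ) ^ 3 ≤ (rAP 4 11 n : ℝ) := by
  refine ⟨1 / 31, by norm_num, fun n hn => ?_⟩
  obtain ⟨S, hS, hcard⟩ := exists_progFree_eleven n
  have hn : (1 : ℝ) ≤ n := by exact_mod_cast hn
  have hden : 30 * (n : ℝ) + 1 ≤ 31 * (n : ℝ) ^ 3 := by
    nlinarith [le_self_pow₀ hn (by norm_num : 3 ≠ 0)]
  calc 1 / 31 * 7 ^ n / (n : ℝ) ^ 3 = (7 : ℝ) ^ n / (31 * (n : ℝ) ^ 3) := by ring
    _ ≤ (7 : ℝ) ^ n / (30 * n + 1) := by gcongr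
    _ ≤ S.card := hcard
    _ ≤ rAP 4 11 n := by exact_mod_cast card_le_rAP hS
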